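/- In the call-by-value λ-calculus, the up-to-λ-abstraction function lam strongly evolves to lam ∪ red, lam ∪ red; that is, whenever R ⤳ S,T, then lam(R) ⤳ (lam ∪ red)(S), (lam ∪ red)(T). -/

import Mathlib

namespace NF

/-! ### Functions on binary relations -/

/-- Binary relations over `α`, as sets of pairs. -/
abbrev Rel (α : Type) := Set (α × α)

/-- Functions on relations. -/
abbrev RelF (α : Type) := Rel α → Rel α

/-- The identity function on relations. -/
def idF {α : Type} : RelF α := fun R => R

/-- Pointwise union of functions on relations. -/
def unionF {α : Type} (f g : RelF α) : RelF α := fun R => f R ∪ g R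

/-- Pointwise composition of functions on relations. -/
def compF {α : Type} (f g : RelF α) : RelF α := fun R => f (g R)

/-- `f̂ = f ∪ id`. -/
def hatF {α : Type} (f : RelF α) : RelF α := unionF f idF

/-- Iterates `fⁿ`. -/
def iterF {α : Type} (f : RelF α) : ℕ → RelF α
  | 0 => idF
  | n + 1 => compF f (iterF f n)

/-- `f^ω(R) = ⋃ₙ fⁿ(R)`. -/
def omegaF {α : Type} (f : RelF α) : RelF α := fun R => ⋃ n, iterF f n R

/-- `f` is continuous if `f(R) ⊆ ⋃ { f(S) | S ⊆ R, S finite }` for every `R`. -/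
def ContinuousF {α : Type} (f : RelF α) : Prop :=
  ∀ R, f R ⊆ ⋃₀ { T | ∃ S, S ⊆ R ∧ S.Finite ∧ T = f S }

/-- `f` is monotone if `R ⊆ S` implies `f(R) ⊆ f(S)`. -/
def MonotoneF {α : Type} (f : RelF α) : Prop := ∀ ⦃R S : Rel α⦄, R ⊆ S → f R ⊆ f S

/-- A set of functions on relations, seen as the function `⋃_{f ∈ F} f`. -/
def setF {α : Type} (F : Set (RelF α)) : RelF α := fun R => ⋃ f ∈ F, f R

/-- Functions generated from a set `F`: built from members of `F` and `id`
using union, composition and `·^ω`. -/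
inductive Generated {α : Type} (F : Set (RelF α)) : RelF α → Prop
  | mem {f} : f ∈ F → Generated F f
  | id : Generated F idF
  | union {f g} : Generated F f → Generated F g → Generated F (unionF f g)
  | comp {f g} : Generated F f → Generated F g → Generated F (compF f g)
  | omega {f} : Generated F f → Generated F (omegaF f)

/-! ### Call-by-value λ-calculus -/

/-- Terms of the call-by-value λ-calculus, with variables named by natural numbers. -/
inductive Tm : Type
  | var : ℕ → Tm
  | lam : ℕ → Tm → Tm
  | app : Tm → Tm → Tm

/-- Values are variables and λ-abstractions. -/
def IsValue : Tm → Prop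
  | .var _ => True
  | .lam _ _ => True
  | .app _ _ => False

/-- Free variables. -/
def fv : Tm → Finset ℕ
  | .var x => {x}
  | .lam x t => fv t \ {x}
  | .app t s => fv t ∪ fv s

/-- Size of a term. -/
def size : Tm → ℕ
  | .var _ => 1
  | .lam _ t => size t + 1
  | .app t s => size t + size s + 1

/-- A variable not belonging to the given finite set. -/
def freshVar (s : Finset ℕ) : ℕ := s.sup id + 1

/-- Fuelled capture-avoiding substitution (the fuel is an upper bound on the
size of the term being substituted into; `size t` is always enough fuel). -/
def substAux : ℕ → Tm → ℕ → Tm → Tm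
  | 0, t, _, _ => t
  | _ + 1, .var y, x, v => if y = x then v else .var y
  | n + 1, .app t s, x, v => .app (substAux n t x v) (substAux n s x v)
  | n + 1, .lam y t, x, v =>
      if y = x then .lam y t
      else if y ∈ fv v ∧ x ∈ fv t then
        let z := freshVar (fv t ∪ fv v ∪ {x, y})
        .lam z (substAux n (substAux n t y (.var z)) x v)
      else .lam y (substAux n t x v)

/-- Capture-avoiding substitution `t[v/x]`. -/
def subst (t : Tm) (x : ℕ) (v : Tm) : Tm := substAux (size t) t x v

/-- Call-by-value evaluation contexts `E ::= [] | E t | v E`. -/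
inductive ECtx : Type
  | hole : ECtx
  | appL : ECtx → Tm → ECtx
  | appR : (v : Tm) → IsValue v → ECtx → ECtx

/-- Plugging a term in an evaluation context. -/
def plug : ECtx → Tm → Tm
  | .hole, t => t
  | .appL E s, t => .app (plug E t) s
  | .appR v _ E, t => .app v (plug E t)

/-- Free variables of an evaluation context. -/
def fvC : ECtx → Finset ℕ
  | .hole => ∅
  | .appL E s => fvC E ∪ fv s
  | .appR v _ E => fv v ∪ fvC E

/-- Call-by-value reduction: `E[(λx.t) v] → E[t[v/x]]`. -/
inductive Step : Tm → Tm → Prop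
  | beta (E : ECtx) (x : ℕ) (t v : Tm) :
      IsValue v → Step (plug E (.app (.lam x t) v)) (plug E (subst t x v))

/-- Reflexive-transitive closure of reduction. -/
def Steps : Tm → Tm → Prop := Relation.ReflTransGen Step

/-- Irreducible terms. -/
def Irred (t : Tm) : Prop := ∀ s, ¬ Step t s

/-- `t` evaluates to `s`. -/
def Eval (t s : Tm) : Prop := Steps t s ∧ Irred s

/-- `v R^v w`: `(v x) R (w x)` for a fresh variable `x`. -/
def ValRel (R : Rel Tm) (v w : Tm) : Prop :=
  ∃ x, x ∉ fv v ∪ fv w ∧ (Tm.app v (.var x), Tm.app w (.var x)) ∈ R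

/-- `E R^c E'`: `E[x] R E'[x]` for a fresh variable `x`. -/
def CtxRel (R : Rel Tm) (E E' : ECtx) : Prop :=
  ∃ x, x ∉ fvC E ∪ fvC E' ∧ (plug E (.var x), plug E' (.var x)) ∈ R

/-- Diacritical progress `R ⤳ S,T`. -/
def Progress (R S T : Rel Tm) : Prop :=
  R ⊆ S ∧ S ⊆ T ∧ ∀ t s, (t, s) ∈ R →
    ((∀ t', Step t t' → ∃ s', Steps s s' ∧ (t', s') ∈ T) ∧
     (IsValue t → ∃ w, IsValue w ∧ Eval s w ∧ ValRel S t w) ∧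
     (∀ E x v, IsValue v → t = plug E (.app (.var x) v) →
        ∃ E' w, IsValue w ∧ Eval s (plug E' (.app (.var x) w)) ∧
          CtxRel T E E' ∧ ValRel T v w) ∧
     (∀ s', Step s s' → ∃ t', Steps t t' ∧ (t', s') ∈ T) ∧
     (IsValue s → ∃ v, IsValue v ∧ Eval t v ∧ ValRel S v s) ∧
     (∀ E' x w, IsValue w → s = plug E' (.app (.var x) w) →
        ∃ E v, IsValue v ∧ Eval t (plug E (.app (.var x) v)) ∧
          CtxRel T E E' ∧ ValRel T v w))

/-- Normal-form bisimulation: `R ⤳ R,R`. -/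
def IsBisim (R : Rel Tm) : Prop := Progress R R R

/-- Normal-form bisimilarity: the union of all normal-form bisimulations. -/
def Bisim : Rel Tm := { p | ∃ R, IsBisim R ∧ p ∈ R }

/-- Up-to technique. -/
def UpTo (f : RelF Tm) : Prop := ∀ R, Progress R R (f R) → R ⊆ Bisim

/-- Strong up-to technique. -/
def StrongUpTo (f : RelF Tm) : Prop := ∀ R, Progress R (f R) (f R) → R ⊆ Bisim

/-- `f` evolves to `g, h`. -/
def Evolve (f g h : RelF Tm) : Prop :=
  ∀ R T, Progress R R T → Progress (f R) (g R) (h T)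

/-- `f` strongly evolves to `g, h`. -/
def SEvolve (f g h : RelF Tm) : Prop :=
  ∀ R S T, Progress R S T → Progress (f R) (g S) (h T)

/-- `F` is diacritically compatible with witness `S ⊆ F`. -/
def Compatible (F S : Set (RelF Tm)) : Prop :=
  S ⊆ F ∧ (∀ f ∈ F, ContinuousF f) ∧
  (∀ f ∈ S, SEvolve f (omegaF (hatF (setF S))) (omegaF (hatF (setF F)))) ∧
  (∀ f ∈ F, Evolve f
    (compF (omegaF (hatF (setF S))) (compF (hatF (setF F)) (omegaF (hatF (setF S)))))
    (omegaF (hatF (setF F))))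

/-! ### Up-to techniques for the λ-calculus -/

/-- Up to reflexivity. -/
def reflF : RelF Tm := fun _ => { p | p.1 = p.2 }

/-- Up to λ-abstraction. -/
def lamF : RelF Tm := fun R => { p | ∃ x t s, (t, s) ∈ R ∧ p = (Tm.lam x t, Tm.lam x s) }

/-- Up to substitution. -/
def substF : RelF Tm := fun R =>
  { p | ∃ t s x v w, (t, s) ∈ R ∧ IsValue v ∧ IsValue w ∧ ValRel R v w ∧
        p = (subst t x v, subst s x w) }

/-- Up to evaluation context. -/
def ectxF : RelF Tm := fun R =>
  { p | ∃ E E' t s, (t, s) ∈ R ∧ CtxRel R E E' ∧ p = (plug E t, plug E' s) }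

/-- Up to reduction. -/
def redF : RelF Tm := fun R =>
  { p | ∃ t' s', Steps p.1 t' ∧ Steps p.2 s' ∧ (t', s') ∈ R }

/-- General contexts: terms with a single hole. -/
inductive GCtx : Type
  | hole : GCtx
  | lam : ℕ → GCtx → GCtx
  | appL : GCtx → Tm → GCtx
  | appR : Tm → GCtx → GCtx

/-- Plugging a term in a general context. -/
def gplug : GCtx → Tm → Tm
  | .hole, t => t
  | .lam x C, t => .lam x (gplug C t)
  | .appL C s, t => .app (gplug C t) s
  | .appR s C, t => .app s (gplug C t)

/-- Up to context. -/
def utctxF : RelF Tm := fun R => { p | ∃ C t s, (t, s) ∈ R ∧ p = (gplug C t, gplug C s) }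

lemma MonotoneF.unionF {α : Type} {f g : RelF α} (hf : MonotoneF f) (hg : MonotoneF g) :
    MonotoneF (unionF f g) :=
  fun _ _ h => Set.union_subset_union (hf h) (hg h)

lemma lamF_monotone : MonotoneF lamF := by
  rintro R S hRS _ ⟨x, t, s, hts, rfl⟩
  exact ⟨x, t, s, hRS hts, rfl⟩

lemma redF_monotone : MonotoneF redF := by
  rintro R S hRS _ ⟨t', s', ht, hs, hts⟩
  exact ⟨t', s', ht, hs, hRS hts⟩

lemma ValRel.mono {R S : Rel Tm} {v w : Tm} (h : ValRel R v w) (hRS : R ⊆ S) : ValRel S v w :=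
  let ⟨x, hx, hmem⟩ := h
  ⟨x, hx, hRS hmem⟩

lemma plug_app_ne_lam (E : ECtx) (a b : Tm) (y : ℕ) (u : Tm) :
    plug E (.app a b) ≠ .lam y u := by
  cases E <;> simp [plug]

lemma irred_lam (x : ℕ) (t : Tm) : Irred (.lam x t) := by
  intro s h
  generalize hlam : Tm.lam x t = u at h
  cases h
  exact plug_app_ne_lam _ _ _ x t hlam.symm

lemma eval_lam (x : ℕ) (t : Tm) : Eval (.lam x t) (.lam x t) :=
  ⟨.refl, irred_lam x t⟩

lemma substAux_var_self (x : ℕ) (n : ℕ) (t : Tm) : substAux n t x (.var x) = t := by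
  induction n generalizing t with
  | zero => rfl
  | succ n ih =>
    cases t with
    | var y => by_cases h : y = x <;> simp [substAux, h]
    | app a b => simp [substAux, ih]
    | lam y u =>
      by_cases h : y = x
      · simp [substAux, h]
      · have hcapture : ¬ (y ∈ fv (.var x) ∧ x ∈ fv u) := by simp [fv, h]
        simp [substAux, h, hcapture, ih]

lemma subst_var_self (t : Tm) (x : ℕ) : subst t x (.var x) = t :=
  substAux_var_self x _ t

lemma step_app_lam_var (x : ℕ) (t : Tm) : Step (.app (.lam x t) (.var x)) t := by
  simpa [plug, subst_var_self] using Step.beta .hole x t (.var x) trivial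

/-- The bound variable `x` is fresh for `λx.t` and `λx.s`, and applying them to it β-reduces to
`t` and `s`: this is why `red` is needed for the value clause. -/
lemma valRel_redF_lam {R : Rel Tm} {t s : Tm} (x : ℕ) (hts : (t, s) ∈ R) :
    ValRel (redF R) (.lam x t) (.lam x s) :=
  ⟨x, by simp [fv], t, s, .single (step_app_lam_var x t), .single (step_app_lam_var x s), hts⟩

/-- `lam` strongly evolves to `lam ∪ red, lam ∪ red`. -/
theorem lam_strongly_evolves :
    SEvolve lamF (unionF lamF redF) (unionF lamF redF) := by
  rintro R S T ⟨hRS, hST, -⟩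
  refine ⟨(lamF_monotone hRS).trans Set.subset_union_left,
    lamF_monotone.unionF redF_monotone hST, ?_⟩
  rintro _ _ ⟨x, t, s, hts, heq⟩
  obtain ⟨rfl, rfl⟩ := Prod.mk.inj heq
  have hval : ValRel (unionF lamF redF S) (.lam x t) (.lam x s) :=
    (valRel_redF_lam x (hRS hts)).mono Set.subset_union_right
  exact ⟨fun _ h => (irred_lam x t _ h).elim,
    fun _ => ⟨.lam x s, trivial, eval_lam x s, hval⟩,
    fun E _ _ _ h => (plug_app_ne_lam E _ _ x t h.symm).elim,
    fun _ h => (irred_lam x s _ h).elim,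
    fun _ => ⟨.lam x t, trivial, eval_lam x t, hval⟩,
    fun E _ _ _ h => (plug_app_ne_lam E _ _ x s h.symm).elim⟩

end NF
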